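/- arXiv:2301.02992 — 4 statements merged into one kernel-verified Lean document; each statement's English description precedes it below -/
import Mathlib

section
/- Let 0 < σ ≤ 1/2, β ∈ ℝ, τ > 0, and define Φ(z) = z e^{-iτ β |z|^{2σ}} for z ∈ ℂ. Then for all z₁, z₂ ∈ ℂ, |Φ(z₁) - Φ(z₂)| ≤ (1 + 2σ|β| τ · min(|z₁|,|z₂|)^{2σ}) |z₁ - z₂|. -/
/-!
Write `Φ(z) = z e^{-iτβ|z|^α}` with `α = 2σ ∈ (0, 1]` and assume `|w| ≤ |z|`. Splitting
`Φ(z) - Φ(w) = (z - w) e^{-iτβ|z|^α} + w (e^{-iτβ|z|^α} - e^{-iτβ|w|^α})`, the first term has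
modulus `|z - w|`, and since `t ↦ e^{it}` is 1-Lipschitz the second is at most
`τ|β| · |w| (|z|^α - |w|^α)`. Concavity of `x ↦ x^α` (its tangent line at `|w|`) bounds
`|w| (|z|^α - |w|^α)` by `α |w|^α (|z| - |w|) ≤ α |w|^α |z - w|`.
-/

open Complex

noncomputable def phaseFlow (α β τ : ℝ) (z : ℂ) : ℂ :=
  z * exp (-I * τ * ((β * ‖z‖ ^ α : ℝ) : ℂ))

lemma norm_exp_ofReal_mul_I_sub_exp_ofReal_mul_I_le (a b : ℝ) :
    ‖exp (a * I) - exp (b * I)‖ ≤ |a - b| := by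
  have factor : exp (a * I) - exp (b * I) = exp (b * I) * (exp (I * (a - b : ℝ)) - 1) := by
    rw [mul_sub, ← exp_add]
    push_cast
    ring_nf
  rw [factor, norm_mul, norm_exp_ofReal_mul_I, one_mul, ← Real.norm_eq_abs]
  exact Real.norm_exp_I_mul_ofReal_sub_one_le

lemma norm_exp_neg_I_mul_sub_exp_neg_I_mul_le {τ : ℝ} (hτ : 0 ≤ τ) (x y : ℝ) :
    ‖exp (-I * τ * x) - exp (-I * τ * y)‖ ≤ τ * |x - y| := by
  have hexp : ∀ t : ℝ, -I * τ * t = ((-(τ * t) : ℝ) : ℂ) * I := fun t => by push_cast; ring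
  rw [hexp, hexp]
  refine (norm_exp_ofReal_mul_I_sub_exp_ofReal_mul_I_le _ _).trans_eq ?_
  rw [← neg_sub', abs_neg, ← mul_sub, abs_mul, abs_of_nonneg hτ]

/-- The tangent line of the concave `x ↦ x ^ α` at `b`, multiplied by `b` so that it also
holds at `b = 0`; in this form it is the weighted AM-GM inequality. -/
lemma mul_rpow_sub_rpow_le {a b α : ℝ} (ha : 0 ≤ a) (hb : 0 ≤ b) (hα0 : 0 ≤ α) (hα1 : α ≤ 1) :
    b * (a ^ α - b ^ α) ≤ α * b ^ α * (a - b) := by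
  have weighted_am_gm : a ^ α * b ^ (1 - α) ≤ α * a + (1 - α) * b :=
    Real.geom_mean_le_arith_mean2_weighted hα0 (sub_nonneg.2 hα1) ha hb (add_sub_cancel α 1)
  have hb_split : b ^ α * b ^ (1 - α) = b := by
    rw [← Real.rpow_add' hb (by norm_num), add_sub_cancel, Real.rpow_one]
  have hbα : 0 ≤ b ^ α := Real.rpow_nonneg hb α
  calc b * (a ^ α - b ^ α) = b ^ α * (a ^ α * b ^ (1 - α)) - b * b ^ α := by
        linear_combination -a ^ α * hb_split
    _ ≤ b ^ α * (α * a + (1 - α) * b) - b * b ^ α := by gcongr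
    _ = α * b ^ α * (a - b) := by ring

lemma norm_phaseFlow_sub_phaseFlow_le_of_norm_le {α β τ : ℝ} (hα0 : 0 ≤ α) (hα1 : α ≤ 1)
    (hτ : 0 ≤ τ) {z w : ℂ} (hwz : ‖w‖ ≤ ‖z‖) :
    ‖phaseFlow α β τ z - phaseFlow α β τ w‖ ≤ (1 + α * |β| * τ * ‖w‖ ^ α) * ‖z - w‖ := by
  set Ez := exp (-I * τ * ((β * ‖z‖ ^ α : ℝ) : ℂ))
  set Ew := exp (-I * τ * ((β * ‖w‖ ^ α : ℝ) : ℂ))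
  have hEz : ‖Ez‖ = 1 := by
    rw [norm_exp]; simp
  have hpow : ‖w‖ ^ α ≤ ‖z‖ ^ α := Real.rpow_le_rpow (norm_nonneg w) hwz hα0
  have hphase : ‖Ez - Ew‖ ≤ τ * |β| * (‖z‖ ^ α - ‖w‖ ^ α) := by
    refine (norm_exp_neg_I_mul_sub_exp_neg_I_mul_le hτ _ _).trans_eq ?_
    rw [← mul_sub, abs_mul, abs_of_nonneg (sub_nonneg.2 hpow), mul_assoc]
  have htangent := mul_rpow_sub_rpow_le (norm_nonneg z) (norm_nonneg w) hα0 hα1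
  have hnorm_sub : ‖z‖ - ‖w‖ ≤ ‖z - w‖ := norm_sub_norm_le z w
  calc ‖phaseFlow α β τ z - phaseFlow α β τ w‖
      = ‖(z - w) * Ez + w * (Ez - Ew)‖ := by
        congr 1
        change z * Ez - w * Ew = _
        ring
    _ ≤ ‖z - w‖ + ‖w‖ * ‖Ez - Ew‖ := by
        grw [norm_add_le, norm_mul, norm_mul, hEz, mul_one]
    _ ≤ ‖z - w‖ + ‖w‖ * (τ * |β| * (‖z‖ ^ α - ‖w‖ ^ α)) := by grw [hphase]
    _ = ‖z - w‖ + τ * |β| * (‖w‖ * (‖z‖ ^ α - ‖w‖ ^ α)) := by ring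
    _ ≤ ‖z - w‖ + τ * |β| * (α * ‖w‖ ^ α * ‖z - w‖) := by
        grw [htangent, hnorm_sub]
    _ = (1 + α * |β| * τ * ‖w‖ ^ α) * ‖z - w‖ := by ring

lemma norm_phaseFlow_sub_phaseFlow_le {α β τ : ℝ} (hα0 : 0 ≤ α) (hα1 : α ≤ 1) (hτ : 0 ≤ τ)
    (z w : ℂ) :
    ‖phaseFlow α β τ z - phaseFlow α β τ w‖
      ≤ (1 + α * |β| * τ * min ‖z‖ ‖w‖ ^ α) * ‖z - w‖ := by
  rcases le_total ‖w‖ ‖z‖ with hwz | hzw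
  · rw [min_eq_right hwz]
    exact norm_phaseFlow_sub_phaseFlow_le_of_norm_le hα0 hα1 hτ hwz
  · rw [min_eq_left hzw, norm_sub_rev, norm_sub_rev z]
    exact norm_phaseFlow_sub_phaseFlow_le_of_norm_le hα0 hα1 hτ hzw

/-- Stability of the nonlinear phase flow `Φ(z) = z e^{-iτβ|z|^{2σ}}` for `0 < σ ≤ 1/2`. -/
theorem stmt2 (σ β τ : ℝ) (hσ0 : 0 < σ) (hσ : σ ≤ 1 / 2) (hτ : 0 < τ)
    (z₁ z₂ : ℂ) :
    ‖(z₁ * Complex.exp (-Complex.I * τ * ((β * (‖z₁‖) ^ (2 * σ) : ℝ) : ℂ))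
          - z₂ * Complex.exp (-Complex.I * τ * ((β * (‖z₂‖) ^ (2 * σ) : ℝ) : ℂ)))‖
      ≤ (1 + 2 * σ * |β| * τ * (min (‖z₁‖) (‖z₂‖)) ^ (2 * σ))
        * ‖(z₁ - z₂)‖ :=
  norm_phaseFlow_sub_phaseFlow_le (by positivity) (by linarith) hτ.le z₁ z₂
end

section
/- Let σ > 0 and β ∈ ℝ, and set f(ρ) = β ρ^σ. Then for all z₁, z₂ ∈ ℂ, |f(|z₁|²) z₁ - f(|z₂|²) z₂| ≤ C max(|z₁|,|z₂|)^{2σ} |z₁ - z₂|, where C depends only on σ and β. -/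
/-!
Write `a = ‖z₁‖ ≥ b = ‖z₂‖` and `e = 2σ`. Then
`a^e z₁ - b^e z₂ = a^e (z₁ - z₂) + (a^e - b^e) z₂`, and the second term is controlled by
`b (a^e - b^e) ≤ max 1 e · a^e (a - b)` with `a - b ≤ |z₁ - z₂|`. Setting `t = b / a`, this is
`1 - t^e ≤ max 1 e · (1 - t)` on `[0, 1]`, which is `t ≤ t^e` for `e ≤ 1` and Bernoulli's
inequality for `e ≥ 1`.
-/

open Real

lemma one_sub_rpow_le_max_mul_one_sub {t : ℝ} (e : ℝ) (ht₀ : 0 ≤ t) (ht₁ : t ≤ 1) :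
    1 - t ^ e ≤ max 1 e * (1 - t) := by
  rcases le_total e 1 with he | he
  · have ht_le := self_le_rpow_of_le_one ht₀ ht₁ he
    nlinarith [le_max_left 1 e]
  · have bernoulli := one_add_mul_self_le_rpow_one_add (s := t - 1) (by linarith) he
    simp only [add_sub_cancel] at bernoulli
    nlinarith [le_max_right 1 e]

lemma mul_rpow_sub_rpow_le_s5 {a b e : ℝ} (he : 0 ≤ e) (hb : 0 ≤ b) (hba : b ≤ a) :
    b * (a ^ e - b ^ e) ≤ max 1 e * a ^ e * (a - b) := by
  rcases (hb.trans hba).eq_or_lt with rfl | ha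
  · simp [le_antisymm hba hb]
  set t := b / a
  have hb_eq : b = t * a := (div_mul_cancel₀ b ha.ne').symm
  have ht₀ : 0 ≤ t := div_nonneg hb ha.le
  have ht₁ : t ≤ 1 := (div_le_one ha).mpr hba
  have hbe : b ^ e = t ^ e * a ^ e := by rw [hb_eq, mul_rpow ht₀ ha.le]
  have hae : 0 ≤ a ^ e := rpow_nonneg ha.le e
  have hte : 0 ≤ 1 - t ^ e := sub_nonneg.mpr (rpow_le_one ht₀ ht₁ he)
  calc b * (a ^ e - b ^ e) = b * a ^ e * (1 - t ^ e) := by rw [hbe]; ring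
    _ ≤ a * a ^ e * (1 - t ^ e) := by gcongr
    _ ≤ a * a ^ e * (max 1 e * (1 - t)) := by
      gcongr
      exact one_sub_rpow_le_max_mul_one_sub e ht₀ ht₁
    _ = max 1 e * a ^ e * (a - b) := by rw [hb_eq]; ring

lemma norm_rpow_smul_sub_rpow_smul_le {E : Type*} [SeminormedAddCommGroup E] [NormedSpace ℝ E]
    {e : ℝ} (he : 0 ≤ e) (x y : E) :
    ‖‖x‖ ^ e • x - ‖y‖ ^ e • y‖ ≤ (1 + max 1 e) * max ‖x‖ ‖y‖ ^ e * ‖x - y‖ := by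
  wlog hyx : ‖y‖ ≤ ‖x‖ generalizing x y
  · rw [← norm_neg, neg_sub, max_comm ‖x‖, ← norm_neg (x - y), neg_sub]
    exact this y x (le_of_not_ge hyx)
  rw [max_eq_left hyx]
  have hae : 0 ≤ ‖x‖ ^ e := rpow_nonneg (norm_nonneg x) e
  have hmono : ‖y‖ ^ e ≤ ‖x‖ ^ e := rpow_le_rpow (norm_nonneg y) hyx he
  have hsplit : ‖x‖ ^ e • x - ‖y‖ ^ e • y = ‖x‖ ^ e • (x - y) + (‖x‖ ^ e - ‖y‖ ^ e) • y := by
    rw [smul_sub, sub_smul]; abel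
  calc ‖‖x‖ ^ e • x - ‖y‖ ^ e • y‖
      ≤ ‖x‖ ^ e * ‖x - y‖ + ‖y‖ * (‖x‖ ^ e - ‖y‖ ^ e) := by
        rw [hsplit]
        refine (norm_add_le _ _).trans_eq ?_
        rw [norm_smul, norm_smul, norm_of_nonneg hae, norm_of_nonneg (sub_nonneg.mpr hmono),
          mul_comm (_ - _)]
    _ ≤ ‖x‖ ^ e * ‖x - y‖ + max 1 e * ‖x‖ ^ e * ‖x - y‖ := by
        gcongr ‖x‖ ^ e * ‖x - y‖ + ?_
        calc ‖y‖ * (‖x‖ ^ e - ‖y‖ ^ e) ≤ max 1 e * ‖x‖ ^ e * (‖x‖ - ‖y‖) :=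
              mul_rpow_sub_rpow_le_s5 he (norm_nonneg y) hyx
          _ ≤ max 1 e * ‖x‖ ^ e * ‖x - y‖ := by gcongr; exact norm_sub_norm_le x y
    _ = (1 + max 1 e) * ‖x‖ ^ e * ‖x - y‖ := by ring

/-- For `σ > 0`: `|f(|z₁|²)z₁ - f(|z₂|²)z₂| ≤ C max(|z₁|,|z₂|)^{2σ}|z₁-z₂|`,
with `C` depending only on `σ, β`. -/
theorem stmt5 (σ β : ℝ) (hσ : 0 < σ) :
    ∃ C : ℝ, 0 < C ∧ ∀ z₁ z₂ : ℂ,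
      ‖((β * (‖z₁‖) ^ (2 * σ) : ℝ) : ℂ) * z₁
          - ((β * (‖z₂‖) ^ (2 * σ) : ℝ) : ℂ) * z₂‖
        ≤ C * (max (‖z₁‖) (‖z₂‖)) ^ (2 * σ)
          * ‖z₁ - z₂‖ := by
  refine ⟨|β| * (1 + max 1 (2 * σ)) + 1, by positivity, fun z₁ z₂ => ?_⟩
  have hscaled : ((β * ‖z₁‖ ^ (2 * σ) : ℝ) : ℂ) * z₁ - ((β * ‖z₂‖ ^ (2 * σ) : ℝ) : ℂ) * z₂
      = β • (‖z₁‖ ^ (2 * σ) • z₁ - ‖z₂‖ ^ (2 * σ) • z₂) := by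
    simp only [smul_sub, smul_smul, ← Complex.real_smul]
  rw [hscaled, norm_smul, norm_eq_abs]
  calc |β| * ‖‖z₁‖ ^ (2 * σ) • z₁ - ‖z₂‖ ^ (2 * σ) • z₂‖
      ≤ |β| * ((1 + max 1 (2 * σ)) * max ‖z₁‖ ‖z₂‖ ^ (2 * σ) * ‖z₁ - z₂‖) :=
        mul_le_mul_of_nonneg_left
          (norm_rpow_smul_sub_rpow_smul_le (by positivity) z₁ z₂) (abs_nonneg β)
    _ ≤ _ := by
        have hbound_nonneg : 0 ≤ max ‖z₁‖ ‖z₂‖ ^ (2 * σ) * ‖z₁ - z₂‖ := by positivity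
        nlinarith
end

section
/- Let σ ≥ 1/2, β ∈ ℝ, and define G : ℂ → ℂ by G(z) = βσ|z|^{2σ-2} z² for z ≠ 0 and G(0) = 0. Then for all z₁, z₂ ∈ ℂ, |G(z₁) - G(z₂)| ≤ C max(|z₁|,|z₂|)^{2σ-1} |z₁ - z₂|, where C depends only on σ and β. -/
/-!
Write `G = βσ F` with `F(z) = |z|^q z²` and `q = 2σ - 2 ≥ -1`. For `|w| ≤ |z| = a` split
`F(z) - F(w) = a^q (z + w)(z - w) + (a^q - |w|^q) w²`. The first term is at most
`2 a^{q+1} |z - w|`. By the mean value theorem the second is `|q| c^{q-1} (a - |w|) |w|²` for some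
`c ∈ (|w|, a)`, and `c^{q-1} |w|² ≤ c^{q+1} ≤ a^{q+1}` because `q + 1 ≥ 0`.
-/

/-- `G(z) = βσ|z|^{2σ-2} z²` for `z ≠ 0`, `G(0)=0`. -/
noncomputable def Gfun (σ β : ℝ) (z : ℂ) : ℂ :=
  if z = 0 then 0 else ((β * σ * (‖z‖) ^ (2 * σ - 2) : ℝ) : ℂ) * z ^ 2

open Real

theorem Real.abs_rpow_sub_rpow_mul_sq_le {q a b : ℝ} (hq : -1 ≤ q) (hb : 0 ≤ b) (hba : b ≤ a) :
    |a ^ q - b ^ q| * b ^ 2 ≤ |q| * a ^ (q + 1) * (a - b) := by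
  have hrhs : 0 ≤ |q| * a ^ (q + 1) * (a - b) := by
    have := rpow_nonneg (hb.trans hba) (q + 1)
    have : 0 ≤ a - b := sub_nonneg.2 hba
    positivity
  rcases hb.eq_or_lt with rfl | hb
  · simpa using hrhs
  rcases hba.eq_or_lt with rfl | hba
  · simp
  obtain ⟨c, ⟨hbc, hca⟩, hc⟩ := exists_hasDerivAt_eq_slope (fun x => x ^ q)
    (fun x => q * x ^ (q - 1)) hba
    (fun x hx => (continuousAt_rpow_const x q (Or.inl (hb.trans_le hx.1).ne')).continuousWithinAt)
    (fun x hx => hasDerivAt_rpow_const (Or.inl (hb.trans hx.1).ne'))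
  have hc0 : 0 < c := hb.trans hbc
  have hdiff : a ^ q - b ^ q = q * c ^ (q - 1) * (a - b) := by
    rw [hc]; field_simp [(sub_pos.2 hba).ne']
  have hpow : c ^ (q - 1) * c ^ 2 = c ^ (q + 1) := by
    rw [← rpow_natCast, ← rpow_add hc0]; norm_num; ring_nf
  calc |a ^ q - b ^ q| * b ^ 2 = |q| * (c ^ (q - 1) * b ^ 2) * (a - b) := by
        rw [hdiff, abs_mul, abs_mul, abs_of_pos (rpow_pos_of_pos hc0 _),
          abs_of_pos (sub_pos.2 hba)]; ring
    _ ≤ |q| * (c ^ (q - 1) * c ^ 2) * (a - b) := by gcongr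
    _ ≤ |q| * a ^ (q + 1) * (a - b) := by rw [hpow]; gcongr; linarith

section

variable {𝕜 : Type*} [RCLike 𝕜]

noncomputable def normRpowMulSq (q : ℝ) (z : 𝕜) : 𝕜 :=
  ((‖z‖ ^ q : ℝ) : 𝕜) * z ^ 2

theorem norm_normRpowMulSq_sub_le {q : ℝ} (hq : -1 ≤ q) {z w : 𝕜} (hwz : ‖w‖ ≤ ‖z‖) :
    ‖normRpowMulSq q z - normRpowMulSq q w‖ ≤ (2 + |q|) * ‖z‖ ^ (q + 1) * ‖z - w‖ := by
  rcases (norm_nonneg z).eq_or_lt with ha | ha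
  · have hw : w = 0 := norm_le_zero_iff.1 (ha ▸ hwz)
    have hz : z = 0 := norm_eq_zero.1 ha.symm
    simp [hz, hw]
  set a := ‖z‖
  set b := ‖w‖
  have hsplit : normRpowMulSq q z - normRpowMulSq q w
      = ((a ^ q : ℝ) : 𝕜) * (z + w) * (z - w) + ((a ^ q - b ^ q : ℝ) : 𝕜) * w ^ 2 := by
    unfold normRpowMulSq; push_cast; ring
  have hsum : ‖z + w‖ ≤ 2 * a := (norm_add_le z w).trans (by linarith)
  have hab : a - b ≤ ‖z - w‖ := norm_sub_norm_le z w
  have hmvt := abs_rpow_sub_rpow_mul_sq_le hq (norm_nonneg w) hwz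
  calc ‖normRpowMulSq q z - normRpowMulSq q w‖
      ≤ a ^ q * ‖z + w‖ * ‖z - w‖ + |a ^ q - b ^ q| * b ^ 2 := by
        rw [hsplit]
        refine (norm_add_le _ _).trans_eq ?_
        simp only [norm_mul, norm_pow, RCLike.norm_ofReal, abs_of_pos (rpow_pos_of_pos ha q)]
        rfl
    _ ≤ a ^ q * (2 * a) * ‖z - w‖ + |q| * a ^ (q + 1) * ‖z - w‖ := by
        gcongr ?_ + ?_
        · gcongr
        · exact hmvt.trans (by gcongr)
    _ = (2 + |q|) * a ^ (q + 1) * ‖z - w‖ := by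
        rw [rpow_add_one ha.ne']; ring

theorem norm_normRpowMulSq_sub_le_max {q : ℝ} (hq : -1 ≤ q) (z w : 𝕜) :
    ‖normRpowMulSq q z - normRpowMulSq q w‖
      ≤ (2 + |q|) * max ‖z‖ ‖w‖ ^ (q + 1) * ‖z - w‖ := by
  rcases le_total ‖w‖ ‖z‖ with h | h
  · rw [max_eq_left h]
    exact norm_normRpowMulSq_sub_le hq h
  · rw [max_eq_right h, norm_sub_rev, norm_sub_rev z]
    exact norm_normRpowMulSq_sub_le hq h

end

theorem Gfun_eq_mul_normRpowMulSq (σ β : ℝ) (z : ℂ) :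
    Gfun σ β z = ((β * σ : ℝ) : ℂ) * normRpowMulSq (2 * σ - 2) z := by
  unfold Gfun normRpowMulSq
  split_ifs with hz
  · simp [hz]
  · rw [RCLike.ofReal_eq_complex_ofReal]; push_cast; ring

/-- For `σ ≥ 1/2`: `|G(z₁) - G(z₂)| ≤ C max(|z₁|,|z₂|)^{2σ-1}|z₁-z₂|`,
with `C` depending only on `σ, β`. -/
theorem stmt6 (σ β : ℝ) (hσ : 1 / 2 ≤ σ) :
    ∃ C : ℝ, 0 < C ∧ ∀ z₁ z₂ : ℂ,
      ‖Gfun σ β z₁ - Gfun σ β z₂‖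
        ≤ C * (max (‖z₁‖) (‖z₂‖)) ^ (2 * σ - 1)
          * ‖z₁ - z₂‖ := by
  have hσ₀ : 0 ≤ σ := by linarith
  refine ⟨|β| * σ * (2 + |2 * σ - 2|) + 1, by positivity, fun z₁ z₂ => ?_⟩
  have hF := norm_normRpowMulSq_sub_le_max (by linarith : -1 ≤ 2 * σ - 2) z₁ z₂
  rw [show 2 * σ - 2 + 1 = 2 * σ - 1 by ring] at hF
  rw [Gfun_eq_mul_normRpowMulSq, Gfun_eq_mul_normRpowMulSq, ← mul_sub, norm_mul,
    Complex.norm_real, norm_mul, norm_eq_abs, norm_eq_abs, abs_of_nonneg hσ₀]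
  calc |β| * σ * ‖normRpowMulSq (2 * σ - 2) z₁ - normRpowMulSq (2 * σ - 2) z₂‖
      ≤ |β| * σ * ((2 + |2 * σ - 2|) * max ‖z₁‖ ‖z₂‖ ^ (2 * σ - 1) * ‖z₁ - z₂‖) := by
        gcongr
    _ ≤ (|β| * σ * (2 + |2 * σ - 2|) + 1) * max ‖z₁‖ ‖z₂‖ ^ (2 * σ - 1) * ‖z₁ - z₂‖ := by
        rw [← mul_assoc, ← mul_assoc]
        gcongr
        linarith
end

section
/- Let σ ≥ 1/2, β ∈ ℝ, τ ∈ (0,1), and define Φ(z) = z e^{-iτβ|z|^{2σ}} for z ∈ ℂ. Then for all z₁, z₂ ∈ ℂ, |Φ(z₁) - Φ(z₂)| ≤ (1 + Cτ) |z₁ - z₂| with C ≤ C'(σ,β) max(|z₁|,|z₂|)^{2σ}, where C' depends only on σ and β. -/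
/-!
Write `Φ(z) = z e^{iθ(z)}` with `θ(z) = -τβ|z|^{2σ}`. Then
`Φ(z₁) - Φ(z₂) = (z₁ - z₂) e^{iθ(z₁)} + z₂ (e^{iθ(z₁)} - e^{iθ(z₂)})`, and since `t ↦ e^{it}` is
1-Lipschitz the second term is at most `|z₂| τ|β| ||z₁|^{2σ} - |z₂|^{2σ}|`. For `2σ ≥ 1` the mean
value theorem bounds `||z₁|^{2σ} - |z₂|^{2σ}|` by `2σ M^{2σ-1} |z₁ - z₂|` with `M = max(|z₁|,|z₂|)`,
and the extra factor `|z₂| ≤ M` restores the power `M^{2σ}`.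
-/

open Complex

lemma norm_exp_I_mul_ofReal_sub_exp_I_mul_ofReal_le (θ₁ θ₂ : ℝ) :
    ‖exp (I * θ₁) - exp (I * θ₂)‖ ≤ |θ₁ - θ₂| := by
  have hfactor : exp (I * θ₁) - exp (I * θ₂) = exp (I * θ₂) * (exp (I * ↑(θ₁ - θ₂)) - 1) := by
    rw [mul_sub, ← exp_add]; push_cast; ring_nf
  rw [hfactor, norm_mul, norm_exp_I_mul_ofReal, one_mul]
  exact Real.norm_exp_I_mul_ofReal_sub_one_le

lemma norm_mul_exp_sub_mul_exp_le (z₁ z₂ : ℂ) (θ₁ θ₂ : ℝ) :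
    ‖z₁ * exp (I * θ₁) - z₂ * exp (I * θ₂)‖ ≤ ‖z₁ - z₂‖ + ‖z₂‖ * |θ₁ - θ₂| := by
  calc ‖z₁ * exp (I * θ₁) - z₂ * exp (I * θ₂)‖
      = ‖(z₁ - z₂) * exp (I * θ₁) + z₂ * (exp (I * θ₁) - exp (I * θ₂))‖ := by ring_nf
    _ ≤ ‖z₁ - z₂‖ + ‖z₂‖ * |θ₁ - θ₂| := by
      grw [norm_add_le, norm_mul, norm_mul, norm_exp_I_mul_ofReal, mul_one,
        norm_exp_I_mul_ofReal_sub_exp_I_mul_ofReal_le]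

lemma abs_rpow_sub_rpow_le {p a b : ℝ} (hp : 1 ≤ p) (ha : 0 ≤ a) (hb : 0 ≤ b) :
    |a ^ p - b ^ p| ≤ p * max a b ^ (p - 1) * |a - b| := by
  have hderiv : ∀ t ∈ Set.Icc 0 (max a b),
      HasDerivWithinAt (fun s : ℝ ↦ s ^ p) (p * t ^ (p - 1)) (Set.Icc 0 (max a b)) t :=
    fun _ _ ↦ (Real.hasDerivAt_rpow_const (Or.inr hp)).hasDerivWithinAt
  have hbound : ∀ t ∈ Set.Icc 0 (max a b), ‖p * t ^ (p - 1)‖ ≤ p * max a b ^ (p - 1) := by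
    rintro t ⟨ht₀, htM⟩
    rw [Real.norm_of_nonneg (by positivity)]
    gcongr
  simpa only [Real.norm_eq_abs] using
    Convex.norm_image_sub_le_of_norm_hasDerivWithin_le hderiv hbound (convex_Icc _ _)
      ⟨hb, le_max_right a b⟩ ⟨ha, le_max_left a b⟩

lemma mul_rpow_sub_one_le_rpow {p b M : ℝ} (hp : 1 ≤ p) (hb : 0 ≤ b) (hbM : b ≤ M) :
    b * M ^ (p - 1) ≤ M ^ p := by
  have hM : 0 ≤ M := hb.trans hbM
  calc b * M ^ (p - 1) ≤ M * M ^ (p - 1) := by gcongr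
    _ = M ^ p := by rw [← Real.rpow_one_add' hM (by linarith), add_sub_cancel]

lemma norm_mul_abs_norm_rpow_sub_norm_rpow_le {p : ℝ} (hp : 1 ≤ p) (z₁ z₂ : ℂ) :
    ‖z₂‖ * |‖z₁‖ ^ p - ‖z₂‖ ^ p| ≤ p * max ‖z₁‖ ‖z₂‖ ^ p * ‖z₁ - z₂‖ := by
  calc ‖z₂‖ * |‖z₁‖ ^ p - ‖z₂‖ ^ p|
      ≤ ‖z₂‖ * (p * max ‖z₁‖ ‖z₂‖ ^ (p - 1) * |‖z₁‖ - ‖z₂‖|) := by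
        grw [abs_rpow_sub_rpow_le hp (norm_nonneg z₁) (norm_nonneg z₂)]
    _ = p * (‖z₂‖ * max ‖z₁‖ ‖z₂‖ ^ (p - 1)) * |‖z₁‖ - ‖z₂‖| := by ring
    _ ≤ p * max ‖z₁‖ ‖z₂‖ ^ p * ‖z₁ - z₂‖ := by
        grw [mul_rpow_sub_one_le_rpow hp (norm_nonneg z₂) (le_max_right _ _),
          abs_norm_sub_norm_le]

/-- Stability of `Φ(z) = z e^{-iτβ|z|^{2σ}}` for `σ ≥ 1/2`:
`|Φ(z₁) - Φ(z₂)| ≤ (1 + Cτ)|z₁ - z₂|` with `C ≤ C'(σ,β) max(|z₁|,|z₂|)^{2σ}`. -/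
theorem stmt7 (σ β : ℝ) (hσ : 1 / 2 ≤ σ) :
    ∃ C' : ℝ, 0 < C' ∧ ∀ τ : ℝ, 0 < τ → τ < 1 → ∀ z₁ z₂ : ℂ,
      ‖(z₁ * Complex.exp (-Complex.I * τ * ((β * (‖z₁‖) ^ (2 * σ) : ℝ) : ℂ))
            - z₂ * Complex.exp (-Complex.I * τ * ((β * (‖z₂‖) ^ (2 * σ) : ℝ) : ℂ)))‖
        ≤ (1 + C' * (max (‖z₁‖) (‖z₂‖)) ^ (2 * σ) * τ)
          * ‖(z₁ - z₂)‖ := by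
  refine ⟨2 * σ * |β| + 1, by positivity, fun τ hτ _ z₁ z₂ ↦ ?_⟩
  have hp : 1 ≤ 2 * σ := by linarith
  have hphase : ∀ c : ℝ, -I * τ * (c : ℂ) = I * ((-(τ * c) : ℝ) : ℂ) := fun c ↦ by
    push_cast; ring
  have hdiff : |-(τ * (β * ‖z₁‖ ^ (2 * σ))) - -(τ * (β * ‖z₂‖ ^ (2 * σ)))|
      = τ * |β| * |‖z₁‖ ^ (2 * σ) - ‖z₂‖ ^ (2 * σ)| := by
    rw [show -(τ * (β * ‖z₁‖ ^ (2 * σ))) - -(τ * (β * ‖z₂‖ ^ (2 * σ)))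
        = -(τ * β * (‖z₁‖ ^ (2 * σ) - ‖z₂‖ ^ (2 * σ))) by ring,
      abs_neg, abs_mul, abs_mul, abs_of_pos hτ]
  have hMp : 0 ≤ max ‖z₁‖ ‖z₂‖ ^ (2 * σ) := by positivity
  rw [hphase, hphase]
  calc _ ≤ ‖z₁ - z₂‖ + τ * |β| * (‖z₂‖ * |‖z₁‖ ^ (2 * σ) - ‖z₂‖ ^ (2 * σ)|) := by
        refine (norm_mul_exp_sub_mul_exp_le _ _ _ _).trans_eq ?_
        rw [hdiff]; ring
    _ ≤ ‖z₁ - z₂‖ + τ * |β| * (2 * σ * max ‖z₁‖ ‖z₂‖ ^ (2 * σ) * ‖z₁ - z₂‖) := by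
        grw [norm_mul_abs_norm_rpow_sub_norm_rpow_le hp]
    _ ≤ _ := by nlinarith [norm_nonneg (z₁ - z₂), mul_nonneg hτ.le hMp]
end
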